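/- Let 𝔽 be a field, θ a probability distribution on [k], and f : V_1×⋯×V_k → 𝔽 a nonzero multilinear map. Then ρ_θ(f) = max_F H_θ(M_F f), where the maximum is over all k-tuples F of complete flags of V_1,…,V_k and M_F f denotes the set of maximal points of supp_F f in the product order. -/

import Mathlib

open scoped BigOperators
open scoped Classical
open scoped ComplexOrder

noncomputable section

namespace CVZ

variable {k : ℕ}

/-- A concrete `k`-tensor over `F` with index types `I i`: the coefficient array
(in the standard bases) of a multilinear map `V₁ × ⋯ × V_k → F` with `dim V_i = |I i|`. -/
abbrev Tensor (F : Type*) (I : Fin k → Type*) : Type _ := (∀ i, I i) → F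

section Basic

variable {F : Type*} [Field F] {I J : Fin k → Type*}
  [∀ i, Fintype (I i)] [∀ i, DecidableEq (I i)]
  [∀ i, Fintype (J i)] [∀ i, DecidableEq (J i)]

/-- Coefficient array of the restriction `f ∘ (A₁, …, A_k)`, where `A_i : W_i → V_i`
is given by the matrix `A i`. -/
def restrictBy (A : ∀ i, Matrix (I i) (J i) F) (t : Tensor F I) : Tensor F J :=
  fun β => ∑ α : ∀ i, I i, (∏ i, A i (α i) (β i)) * t α

/-- `t` restricts to `s`. -/
def Restricts (t : Tensor F I) (s : Tensor F J) : Prop :=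
  ∃ A : ∀ i, Matrix (I i) (J i) F, restrictBy A t = s

/-- A choice of bases of the spaces `V_i`, encoded as a tuple of invertible matrices. -/
def IsBasisTuple (B : ∀ i, Matrix (I i) (I i) F) : Prop := ∀ i, IsUnit (B i)

/-- Support of a tensor (with respect to the standard bases). -/
def supp (t : Tensor F I) : Set (∀ i, I i) := {α | t α ≠ 0}

end Basic

section Entropy

/-- A probability distribution on the finite set `X`. -/
def IsProbDist {X : Type*} [Fintype X] (P : X → ℝ) : Prop :=
  (∀ x, 0 ≤ P x) ∧ ∑ x, P x = 1

/-- Base-2 Shannon entropy. -/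
def H2 {X : Type*} [Fintype X] (P : X → ℝ) : ℝ :=
  ∑ x, -(P x * Real.logb 2 (P x))

variable {I : Fin k → Type*} [∀ i, Fintype (I i)] [∀ i, DecidableEq (I i)]

/-- The `i`-th marginal of a distribution on a product set. -/
def marg (P : (∀ i, I i) → ℝ) (i : Fin k) : I i → ℝ :=
  fun a => ∑ α : ∀ i, I i, if α i = a then P α else 0

/-- `H_θ(P)`, the `θ`-weighted average of the marginal entropies. -/
def Hw (θ : Fin k → ℝ) (P : (∀ i, I i) → ℝ) : ℝ :=
  ∑ i, θ i * H2 (marg P i)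

/-- `H_θ(Φ)`, the supremum of `H_θ(P)` over distributions `P` supported on `Φ`. -/
def HwSet (θ : Fin k → ℝ) (Φ : Set (∀ i, I i)) : ℝ :=
  sSup {h | ∃ P : (∀ i, I i) → ℝ, IsProbDist P ∧ (∀ α, P α ≠ 0 → α ∈ Φ) ∧ h = Hw θ P}

/-- Maximal points of a subset of the product order. -/
def maxPoints [∀ i, LinearOrder (I i)] (Φ : Set (∀ i, I i)) : Set (∀ i, I i) :=
  {α | α ∈ Φ ∧ ∀ β ∈ Φ, ¬ α < β}

end Entropy

section SuppFunc

variable {F : Type*} [Field F] {I : Fin k → Type*} [∀ i, Fintype (I i)] [∀ i, DecidableEq (I i)]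

/-- The logarithmic Strassen upper support functional `ρ^θ`. -/
def rhoUpper (θ : Fin k → ℝ) (t : Tensor F I) : ℝ :=
  sInf {h | ∃ B : ∀ i, Matrix (I i) (I i) F, IsBasisTuple B ∧
    h = HwSet θ (supp (restrictBy B t))}

/-- The Strassen upper support functional `ζ^θ`. -/
def zetaUpper (θ : Fin k → ℝ) (t : Tensor F I) : ℝ :=
  if t = 0 then 0 else (2 : ℝ) ^ rhoUpper θ t

/-- The logarithmic Strassen lower support functional `ρ_θ`. -/
def rhoLower [∀ i, LinearOrder (I i)] (θ : Fin k → ℝ) (t : Tensor F I) : ℝ :=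
  sSup {h | ∃ B : ∀ i, Matrix (I i) (I i) F, IsBasisTuple B ∧
    h = HwSet θ (maxPoints (supp (restrictBy B t)))}

/-- The Strassen lower support functional `ζ_θ`. -/
def zetaLower [∀ i, LinearOrder (I i)] (θ : Fin k → ℝ) (t : Tensor F I) : ℝ :=
  if t = 0 then 0 else (2 : ℝ) ^ rhoLower θ t

/-- The instability of a tensor. -/
def instab (t : Tensor F I) : ℝ :=
  sSup {ε : ℝ | 0 ≤ ε ∧ ∃ B : ∀ i, Matrix (I i) (I i) F, IsBasisTuple B ∧
    ∃ w : ∀ i, I i → ℝ, (∀ i x, 0 ≤ w i x) ∧ (∀ i, ∃ x, w i x ≠ 0) ∧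
      ∀ a ∈ supp (restrictBy B t), ∑ i, w i (a i) ≤
        ∑ i, ((∑ x : I i, w i x) / (Fintype.card (I i) : ℝ) - ε * ⨆ x : I i, w i x)}

end SuppFunc

section Ops

variable {F : Type*} [Field F]

/-- The unit tensor `⟨r⟩`. -/
def unitTensor (F : Type*) [Field F] (k r : ℕ) : Tensor F (fun _ : Fin k => Fin r) :=
  fun α => if ∀ i j : Fin k, α i = α j then 1 else 0

variable {n m : Fin k → ℕ}

/-- Direct sum of two tensors, with the concatenated (naturally ordered) bases. -/
def dirSumFin (s : Tensor F fun i => Fin (n i)) (t : Tensor F fun i => Fin (m i)) :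
    Tensor F fun i => Fin (n i + m i) :=
  fun α =>
    (if h : ∀ i, (α i : ℕ) < n i then s (fun i => ⟨(α i : ℕ), h i⟩) else 0) +
    (if h : ∀ i, n i ≤ (α i : ℕ) then
      t (fun i => ⟨(α i : ℕ) - n i, by have h1 := (α i).isLt; have h2 := h i; omega⟩) else 0)

/-- Tensor (Kronecker) product of two tensors, with the product bases ordered naturally. -/
def tensMulFin (s : Tensor F fun i => Fin (n i)) (t : Tensor F fun i => Fin (m i)) :
    Tensor F fun i => Fin (n i * m i) :=
  fun α =>
    s (fun i => ⟨(α i : ℕ) / m i, by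
      have h := (α i).isLt
      exact Nat.div_lt_of_lt_mul (lt_of_lt_of_le h (Nat.mul_comm (n i) (m i)).le)⟩) *
    t (fun i => ⟨(α i : ℕ) % m i, by
      have h := (α i).isLt
      have hpos : 0 < n i * m i := Nat.lt_of_le_of_lt (Nat.zero_le _) h
      have hm : 0 < m i := by
        rcases Nat.eq_zero_or_pos (m i) with h0 | h0
        · simp [h0] at hpos
        · exact h0
      exact Nat.mod_lt _ hm⟩)

/-- The `N`-th tensor power of a tensor (grouping the legs into `k` groups). -/
def tpow {I : Fin k → Type*} (t : Tensor F I) (N : ℕ) : Tensor F fun i => Fin N → I i :=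
  fun α => ∏ j : Fin N, t fun i => α i j

end Ops

section Subrank

variable {F : Type*} [Field F] {I : Fin k → Type*} [∀ i, Fintype (I i)] [∀ i, DecidableEq (I i)]

/-- The subrank `Q(t)` of a tensor: the largest `r` with `⟨r⟩ ≤ t`. -/
def Qtensor (t : Tensor F I) : ℕ :=
  sSup {r : ℕ | Restricts t (unitTensor F k r)}

/-- A slice: a tensor of the form `v ⊗ w` with `v` in the `j`-th leg. -/
def IsSlice (s : Tensor F I) : Prop :=
  ∃ (j : Fin k) (v : I j → F) (w : (∀ i : {i : Fin k // i ≠ j}, I i.1) → F),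
    ∀ α, s α = v (α j) * w (fun i => α i.1)

/-- The slice rank of a tensor. -/
def sliceRank (t : Tensor F I) : ℕ :=
  sInf {r : ℕ | ∃ c : Fin r → Tensor F I, (∀ a, IsSlice (c a)) ∧ t = ∑ a, c a}

end Subrank

section Combinatorial

variable {I : Fin k → Type*}

/-- A diagonal: any two distinct elements differ in all coordinates. -/
def IsDiagonal (D : Set (∀ i, I i)) : Prop :=
  ∀ a ∈ D, ∀ b ∈ D, a ≠ b → ∀ i, a i ≠ b i

/-- The `i`-th projection of a set of tuples. -/
def projSet (D : Set (∀ i, I i)) (i : Fin k) : Set (I i) := {x | ∃ a ∈ D, a i = x}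

/-- A free diagonal in `Φ`: a diagonal `D` with `D = Φ ∩ (D₁ × ⋯ × D_k)`. -/
def IsFreeDiagonal (D Φ : Set (∀ i, I i)) : Prop :=
  IsDiagonal D ∧ D = Φ ∩ {a | ∀ i, a i ∈ projSet D i}

/-- The (combinatorial) subrank of a set: the maximal size of a free diagonal. -/
def Qset (Φ : Set (∀ i, I i)) : ℕ :=
  sSup {r : ℕ | ∃ D : Set (∀ i, I i), IsFreeDiagonal D Φ ∧ D.ncard = r}

/-- The `N`-fold coordinatewise power of a set of tuples. -/
def setPow (Φ : Set (∀ i, I i)) (N : ℕ) : Set (∀ i, Fin N → I i) :=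
  {α | ∀ j : Fin N, (fun i => α i j) ∈ Φ}

/-- A tight set. -/
def TightSet (Φ : Set (∀ i, I i)) : Prop :=
  ∃ u : ∀ i, I i → ℤ, (∀ i, Function.Injective (u i)) ∧ ∀ α ∈ Φ, ∑ i, u i (α i) = 0

/-- `Φ` is a combinatorial degeneration of `Ψ` (written `Ψ ⊵ Φ`). -/
def CombDegen (Ψ Φ : Set (∀ i, I i)) : Prop :=
  Φ ⊆ Ψ ∧ ∃ u : ∀ i, I i → ℤ,
    (∀ α ∈ Φ, ∑ i, u i (α i) = 0) ∧ ∀ α ∈ Ψ, α ∉ Φ → 0 < ∑ i, u i (α i)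

end Combinatorial

/-- A tight tensor: some basis tuple gives a tight support. -/
def TightTensor {F : Type*} [Field F] {I : Fin k → Type*} [∀ i, Fintype (I i)]
    [∀ i, DecidableEq (I i)] (t : Tensor F I) : Prop :=
  ∃ B : ∀ i, Matrix (I i) (I i) F, IsBasisTuple B ∧ TightSet (supp (restrictBy B t))

/-- A complete (decreasing) flag of subspaces, `W 0 = ⊤` and `dim (W j) = dim V − j`. -/
def IsCompleteFlag (F : Type*) [Field F] {V : Type*} [AddCommGroup V] [Module F V]
    (W : ℕ → Submodule F V) : Prop :=
  Antitone W ∧ W 0 = ⊤ ∧ ∀ j : ℕ, Module.finrank F (W j) = Module.finrank F V - j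

/-- Evaluation of (the multilinear map associated with) `t` at a tuple of vectors. -/
def eval {F : Type*} [Field F] {I : Fin k → Type*} [∀ i, Fintype (I i)] [∀ i, DecidableEq (I i)]
    (t : Tensor F I) (v : ∀ i, I i → F) : F :=
  ∑ α : ∀ i, I i, (∏ i, v i (α i)) * t α

/-- The support of `t` with respect to a tuple of complete flags. -/
def suppFlag {F : Type*} [Field F] {n : Fin k → ℕ} (t : Tensor F fun i => Fin (n i))
    (W : ∀ i, ℕ → Submodule F (Fin (n i) → F)) : Set (∀ i, Fin (n i)) :=
  {α | ∃ v : ∀ i, Fin (n i) → F, (∀ i, v i ∈ W i (α i : ℕ)) ∧ eval t v ≠ 0}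

section Quantum

variable {I : Fin k → Type*} [∀ i, Fintype (I i)] [∀ i, DecidableEq (I i)]

/-- Von Neumann entropy (base 2) of a Hermitian matrix. -/
def vnEntropy {d : Type*} [Fintype d] [DecidableEq d] (ρ : Matrix d d ℂ) : ℝ :=
  if h : ρ.IsHermitian then ∑ x, -(h.eigenvalues x * Real.logb 2 (h.eigenvalues x)) else 0

/-- The `j`-th marginal (reduced density matrix) of the pure state `|t⟩⟨t| / ⟨t|t⟩`. -/
def margMat (t : Tensor ℂ I) (j : Fin k) : Matrix (I j) (I j) ℂ :=
  fun a b =>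
    (∑ α : ∀ i, I i, ∑ β : ∀ i, I i,
      if α j = a ∧ β j = b ∧ (∀ i, i ≠ j → α i = β i) then t α * star (t β) else 0) /
    ∑ α : ∀ i, I i, t α * star (t α)

/-- The logarithmic lower quantum functional `E_θ` for `θ` a distribution on `[k]`. -/
def Ewq (θ : Fin k → ℝ) (t : Tensor ℂ I) : ℝ :=
  sSup {h | ∃ A : ∀ i, Matrix (I i) (I i) ℂ, IsBasisTuple A ∧
    h = ∑ j, θ j * vnEntropy (margMat (restrictBy A t) j)}

/-- The marginal (reduced density matrix) on the legs in `S` of the pure state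
`|t⟩⟨t| / ⟨t|t⟩`. -/
def margMatSet (t : Tensor ℂ I) (S : Finset (Fin k)) :
    Matrix (∀ i : {x : Fin k // x ∈ S}, I i.1) (∀ i : {x : Fin k // x ∈ S}, I i.1) ℂ :=
  fun a b =>
    (∑ α : ∀ i, I i, ∑ β : ∀ i, I i,
      if (∀ (i : Fin k) (hi : i ∈ S), α i = a ⟨i, hi⟩ ∧ β i = b ⟨i, hi⟩) ∧
         (∀ i, i ∉ S → α i = β i)
      then t α * star (t β) else 0) /
    ∑ α : ∀ i, I i, t α * star (t α)

/-- A probability distribution on the bipartitions `{S, S̄}` of `[k]` (encoded by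
choosing a representative `S` for each bipartition occurring in the support). -/
def IsBipDist (θ : Finset (Fin k) → ℝ) : Prop :=
  (∀ S, 0 ≤ θ S) ∧ (∀ S, θ S ≠ 0 → S.Nonempty ∧ Sᶜ.Nonempty) ∧
    ∑ S : Finset (Fin k), θ S = 1

/-- The logarithmic lower quantum functional `E_θ` for `θ` a distribution on bipartitions. -/
def EwqBip (θ : Finset (Fin k) → ℝ) (t : Tensor ℂ I) : ℝ :=
  sSup {h | ∃ A : ∀ i, Matrix (I i) (I i) ℂ, IsBasisTuple A ∧
    h = ∑ S : Finset (Fin k), θ S * vnEntropy (margMatSet (restrictBy A t) S)}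

/-- The lower quantum functional `F_θ`. -/
def FwqBip (θ : Finset (Fin k) → ℝ) (t : Tensor ℂ I) : ℝ :=
  if t = 0 then 0 else (2 : ℝ) ^ EwqBip θ t

/-- Degeneration: `t` lies in the closure of the `GL × ⋯ × GL`-orbit of `s`. -/
def Degen (s t : Tensor ℂ I) : Prop :=
  t ∈ closure {u : Tensor ℂ I | ∃ A : ∀ i, Matrix (I i) (I i) ℂ,
    IsBasisTuple A ∧ restrictBy A s = u}

end Quantum

/-- Trace norm of a complex matrix: `Tr √(AᴴA)`. -/
def traceNorm {d : Type*} [Fintype d] [DecidableEq d] (A : Matrix d d ℂ) : ℝ :=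
  (((((Matrix.posSemidef_conjTranspose_mul_self A).1.eigenvectorUnitary : Matrix d d ℂ) *
    Matrix.diagonal (((↑) : ℝ → ℂ) ∘ Real.sqrt ∘ (Matrix.posSemidef_conjTranspose_mul_self A).1.eigenvalues) *
    (star (Matrix.posSemidef_conjTranspose_mul_self A).1.eigenvectorUnitary : Matrix d d ℂ))).trace).re

/-- `conjIter ρ X j = X_j ⋯ X_2 X_1 ρ X_1 X_2 ⋯ X_j`. -/
def conjIter {d : Type*} [Fintype d] (ρ : Matrix d d ℂ) {n : ℕ}
    (X : Fin n → Matrix d d ℂ) : ℕ → Matrix d d ℂ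
  | 0 => ρ
  | (j + 1) => if h : j < n then X ⟨j, h⟩ * conjIter ρ X j * X ⟨j, h⟩ else conjIter ρ X j

/-- A tricolored sum-free set in `G × G × G`. -/
def IsTriColoredSumFree {G : Type*} [AddCommGroup G] (Γ : Set (G × G × G)) : Prop :=
  (∀ a ∈ Γ, ∀ b ∈ Γ, a ≠ b → a.1 ≠ b.1 ∧ a.2.1 ≠ b.2.1 ∧ a.2.2 ≠ b.2.2) ∧
  ∀ x y z : G, (∃ a ∈ Γ, a.1 = x) → (∃ a ∈ Γ, a.2.1 = y) → (∃ a ∈ Γ, a.2.2 = z) →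
    (x + y + z = 0 ↔ (x, y, z) ∈ Γ)

/-- The maximal size `s₃(G)` of a tricolored sum-free set in `G × G × G`. -/
def s3 (G : Type*) [AddCommGroup G] : ℕ :=
  sSup {r : ℕ | ∃ Γ : Set (G × G × G), IsTriColoredSumFree Γ ∧ Γ.ncard = r}

/-- Binary entropy function (base 2), with the convention `0 · log 0 = 0`. -/
def binH (p : ℝ) : ℝ := -(p * Real.logb 2 p) - (1 - p) * Real.logb 2 (1 - p)

open Filter Topology

/-!
A basis tuple `C` determines the tuple `F` of flags spanned by the tails of its bases, and every
tuple of complete flags arises in this way: pick in each `W j \ W (j + 1)` one vector. For such an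
adapted pair, expanding `f` multilinearly shows that `supp_F f` is the down-closure of `supp_C f`,
and a set and its down-closure have the same maximal points. So `M_F f = M_C f`, and both suprema
run over the same set of values `H_θ(M)`.
-/

section Flag

variable {F V : Type*} [Field F] [AddCommGroup V] [Module F V] {N : ℕ}

variable (F) in
def tailSpan (b : Fin N → V) (j : ℕ) : Submodule F V :=
  Submodule.span F (b '' {β | j ≤ (β : ℕ)})

lemma tailSpan_antitone (b : Fin N → V) : Antitone (tailSpan F b) :=
  fun _ _ h => Submodule.span_mono (Set.image_mono fun _ hβ => le_trans h hβ)

lemma tailSpan_zero (b : Fin N → V) : tailSpan F b 0 = Submodule.span F (Set.range b) := by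
  simp [tailSpan]

lemma tailSpan_self (b : Fin N → V) : tailSpan F b N = ⊥ := by
  simp [tailSpan]

lemma mem_tailSpan_iff {b : Fin N → V} {j : ℕ} {v : V} :
    v ∈ tailSpan F b j ↔ ∃ c : Fin N → F, (∀ β, c β ≠ 0 → j ≤ (β : ℕ)) ∧ ∑ β, c β • b β = v := by
  rw [tailSpan, Finsupp.mem_span_image_iff_linearCombination]
  constructor
  · rintro ⟨l, hl, rfl⟩
    refine ⟨l, fun β hβ => ?_, ?_⟩
    · by_contra h
      exact hβ ((Finsupp.mem_supported' F l).mp hl β h)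
    · rw [Finsupp.linearCombination_apply, Finsupp.sum_fintype _ _ (by simp)]
  · rintro ⟨c, hc, rfl⟩
    refine ⟨Finsupp.equivFunOnFinite.symm c, (Finsupp.mem_supported' F _).mpr fun β h => ?_, ?_⟩
    · by_contra h'
      exact h (hc β h')
    · rw [Finsupp.linearCombination_apply, Finsupp.sum_fintype _ _ (by simp)]
      rfl

lemma Fin.card_subtype_le_val (N j : ℕ) : Fintype.card {β : Fin N // j ≤ (β : ℕ)} = N - j := by
  rw [Fintype.card_subtype, ← Nat.card_Ico j N, ← Finset.card_map Fin.valEmbedding]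
  congr 1
  ext x
  simp only [Finset.mem_map, Finset.mem_filter, Finset.mem_univ, true_and,
    Fin.valEmbedding_apply, Finset.mem_Ico]
  exact ⟨fun ⟨⟨y, hy⟩, h, e⟩ => e ▸ ⟨h, hy⟩, fun h => ⟨⟨x, h.2⟩, h.1, rfl⟩⟩

lemma finrank_tailSpan {b : Fin N → V} (hb : LinearIndependent F b) (j : ℕ) :
    Module.finrank F (tailSpan F b j) = N - j := by
  rw [tailSpan, Set.image_eq_range]
  exact (finrank_span_eq_card (hb.comp _ Subtype.val_injective)).trans (Fin.card_subtype_le_val N j)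

lemma isCompleteFlag_tailSpan [FiniteDimensional F V] {b : Fin N → V}
    (hb : LinearIndependent F b) (hN : Module.finrank F V = N) :
    IsCompleteFlag F (tailSpan F b) :=
  ⟨tailSpan_antitone b,
    by rw [tailSpan_zero]; exact hb.span_eq_top_of_card_eq_finrank' (by simp [hN]),
    fun j => by rw [finrank_tailSpan hb, hN]⟩

namespace IsCompleteFlag

variable {W : ℕ → Submodule F V}

lemma succ_lt (hW : IsCompleteFlag F W) {j : ℕ} (hj : j < Module.finrank F V) :
    W (j + 1) < W j := by
  refine lt_of_le_of_ne (hW.1 j.le_succ) fun h => ?_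
  have := hW.2.2 j
  have := hW.2.2 (j + 1)
  rw [h] at *
  omega

lemma eq_tailSpan [FiniteDimensional F V] (hW : IsCompleteFlag F W) (hN : Module.finrank F V = N)
    {b : Fin N → V} (hmem : ∀ β : Fin N, b β ∈ W β) (hnot : ∀ β : Fin N, b β ∉ W (β + 1))
    {j : ℕ} (hj : j ≤ N) :
    W j = tailSpan F b j := by
  induction hj using Nat.decreasingInduction with
  | self =>
    rw [tailSpan_self]
    exact Submodule.finrank_eq_zero.mp (by rw [hW.2.2, hN, Nat.sub_self])
  | of_succ j hj ih =>
    have hle : tailSpan F b j ≤ W j :=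
      Submodule.span_le.mpr (by rintro _ ⟨β, hβ, rfl⟩; exact hW.1 hβ (hmem β))
    have hlt : W (j + 1) < tailSpan F b j := by
      rw [ih]
      refine lt_of_le_of_ne (tailSpan_antitone b j.le_succ) fun h => hnot ⟨j, hj⟩ ?_
      rw [ih, h]
      exact Submodule.subset_span ⟨⟨j, hj⟩, le_refl j, rfl⟩
    refine (Submodule.eq_of_le_of_finrank_le hle ?_).symm
    have := Submodule.finrank_lt_finrank_of_lt hlt
    have := hW.2.2 j
    have := hW.2.2 (j + 1)
    omega

lemma exists_linearIndependent_eq_tailSpan [FiniteDimensional F V] (hW : IsCompleteFlag F W)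
    (hN : Module.finrank F V = N) :
    ∃ b : Fin N → V, LinearIndependent F b ∧ ∀ j ≤ N, W j = tailSpan F b j := by
  have hex (β : Fin N) : ∃ x ∈ W β, x ∉ W (β + 1) :=
    SetLike.exists_of_lt (hW.succ_lt (hN ▸ β.isLt))
  choose b hmem hnot using hex
  have hspan := fun j => hW.eq_tailSpan hN hmem hnot (j := j)
  refine ⟨b, linearIndependent_of_top_le_span_of_card_eq_finrank ?_ (by simp [hN]), hspan⟩
  rw [← tailSpan_zero, ← hspan 0 N.zero_le, hW.2.1]

end IsCompleteFlag

end Flag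

lemma maxPoints_lowerClosure {I : Fin k → Type*} [∀ i, LinearOrder (I i)]
    (S : Set (∀ i, I i)) :
    maxPoints (lowerClosure S : Set (∀ i, I i)) = maxPoints S := by
  ext α
  simp only [maxPoints, SetLike.mem_coe, mem_lowerClosure]
  constructor
  · rintro ⟨⟨β, hβ, hαβ⟩, hmax⟩
    obtain rfl : α = β := hαβ.eq_of_not_lt (hmax β ⟨β, hβ, le_rfl⟩)
    exact ⟨hβ, fun γ hγ => hmax γ ⟨γ, hγ, le_rfl⟩⟩
  · rintro ⟨hα, hmax⟩
    exact ⟨⟨α, hα, le_rfl⟩, fun β ⟨γ, hγ, hβγ⟩ hαβ => hmax γ hγ (hαβ.trans_le hβγ)⟩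

section Support

variable {F : Type*} [Field F] {I : Fin k → Type*} [∀ i, Fintype (I i)] [∀ i, DecidableEq (I i)]

lemma eval_sum_smul (f : Tensor F I) (b : ∀ i, I i → I i → F) (c : ∀ i, I i → F) :
    eval f (fun i => ∑ β, c i β • b i β) =
      ∑ β : ∀ i, I i, (∏ i, c i (β i)) * eval f (fun i => b i (β i)) := by
  simp only [eval, Finset.sum_apply, Pi.smul_apply, smul_eq_mul, Finset.prod_univ_sum,
    Fintype.piFinset_univ, Finset.sum_mul, Finset.mul_sum, Finset.prod_mul_distrib]
  rw [Finset.sum_comm]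
  refine Finset.sum_congr rfl fun β _ => Finset.sum_congr rfl fun γ _ => ?_
  ring

lemma restrictBy_apply (B : ∀ i, Matrix (I i) (I i) F) (f : Tensor F I) (β : ∀ i, I i) :
    restrictBy B f β = eval f (fun i => (B i).col (β i)) :=
  rfl

lemma suppFlag_eq_lowerClosure {n : Fin k → ℕ} (f : Tensor F fun i => Fin (n i))
    (B : ∀ i, Matrix (Fin (n i)) (Fin (n i)) F) {W : ∀ i, ℕ → Submodule F (Fin (n i) → F)}
    (hW : ∀ i (j : Fin (n i)), W i j = tailSpan F (B i).col j) :
    suppFlag f W = lowerClosure (supp (restrictBy B f)) := by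
  ext α
  simp only [suppFlag, hW, SetLike.mem_coe, mem_lowerClosure, supp, restrictBy_apply]
  constructor
  · rintro ⟨v, hv, hne⟩
    choose c hc hcv using fun i => mem_tailSpan_iff.mp (hv i)
    obtain rfl : v = fun i => ∑ β, c i β • (B i).col β := funext fun i => (hcv i).symm
    rw [eval_sum_smul] at hne
    obtain ⟨β, -, hβ⟩ := Finset.exists_ne_zero_of_sum_ne_zero hne
    have hcβ := Finset.prod_ne_zero_iff.mp (left_ne_zero_of_mul hβ)
    exact ⟨β, right_ne_zero_of_mul hβ, fun i => hc i _ (hcβ i (Finset.mem_univ i))⟩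
  · rintro ⟨β, hβ, hle⟩
    exact ⟨fun i => (B i).col (β i), fun i => Submodule.subset_span ⟨β i, hle i, rfl⟩, hβ⟩

end Support

theorem statement3_general {k : ℕ} {F : Type*} [Field F] {n : Fin k → ℕ}
    (θ : Fin k → ℝ)
    (f : Tensor F fun i => Fin (n i)) :
    rhoLower θ f =
      sSup {h | ∃ W : ∀ i, ℕ → Submodule F (Fin (n i) → F),
        (∀ i, IsCompleteFlag F (W i)) ∧ h = HwSet θ (maxPoints (suppFlag f W))} := by
  unfold rhoLower
  congr 1
  ext h
  constructor
  · rintro ⟨B, hB, rfl⟩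
    refine ⟨fun i => tailSpan F (B i).col, fun i => isCompleteFlag_tailSpan
      (Matrix.linearIndependent_cols_iff_isUnit.mpr (hB i)) (Module.finrank_fin_fun F), ?_⟩
    rw [suppFlag_eq_lowerClosure f B fun _ _ => rfl, maxPoints_lowerClosure]
  · rintro ⟨W, hW, rfl⟩
    choose b hb hWb using fun i =>
      (hW i).exists_linearIndependent_eq_tailSpan (Module.finrank_fin_fun F)
    let B i := (Matrix.of (b i)).transpose
    refine ⟨B, fun i => Matrix.linearIndependent_cols_iff_isUnit.mp (hb i), ?_⟩
    rw [suppFlag_eq_lowerClosure f B fun i j => hWb i j j.isLt.le, maxPoints_lowerClosure]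

/-- the lower support functional via complete flags. -/
theorem statement3 {k : ℕ} {F : Type*} [Field F] {n : Fin k → ℕ}
    (θ : Fin k → ℝ) (hθ : IsProbDist θ)
    (f : Tensor F fun i => Fin (n i)) (hf : f ≠ 0) :
    rhoLower θ f =
      sSup {h | ∃ W : ∀ i, ℕ → Submodule F (Fin (n i) → F),
        (∀ i, IsCompleteFlag F (W i)) ∧ h = HwSet θ (maxPoints (suppFlag f W))} :=
  statement3_general θ f

end CVZ

end
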